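/- arXiv:2507.21747 — 7 statements merged into one kernel-verified Lean document; each statement's English description precedes it below -/
import Mathlib

section
/- Let A be a unital associative algebra with a two-sided ideal m, and suppose m is generated as an (associative) algebra ideal by a subset h which is closed under the Lie bracket with [h,h] ⊆ ℂt for a central-acting element t ∈ h satisfying t·m = m·t = 0. Then m² ⊆ C(A), the center of A, where A = ℂ·1 ⊕ m. -/
open Pointwise


/-- Let `A = ℂ·1 ⊕ m` be a unital associative ℂ-algebra with a
two-sided ideal `m` generated (as a non-unital subalgebra, i.e. spanned by
nonempty products) by a subset `h` with `[h,h] ⊆ ℂt` for some `t ∈ h` with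
`t·m = m·t = 0`. Then `m² ⊆ C(A)`: every product of two elements of `m` is
central in `A`. -/
theorem m_sq_central
    (A : Type*) [Ring A] [Algebra ℂ A]
    (m : Submodule ℂ A)
    (hmul : ∀ x ∈ m, ∀ y ∈ m, x * y ∈ m)
    (hideal : ∀ x ∈ m, ∀ a : A, a * x ∈ m ∧ x * a ∈ m)
    (hdec : ∀ a : A, ∃ c : ℂ, a - c • (1 : A) ∈ m)
    (h : Set A) (hhm : h ⊆ m)
    (t : A) (hth : t ∈ h)
    (hbr : ∀ X ∈ h, ∀ Y ∈ h, ∃ c : ℂ, X * Y - Y * X = c • t)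
    (ht : ∀ x ∈ m, t * x = 0 ∧ x * t = 0)
    (hgen : (m : Set A) ⊆
      ↑(Submodule.span ℂ {a : A | ∃ l : List A, l ≠ [] ∧ (∀ x ∈ l, x ∈ h) ∧ a = l.prod})) :
    ∀ x ∈ m, ∀ y ∈ m, ∀ a : A, (x * y) * a = a * (x * y) := by
  set S : Set A := {a : A | ∃ l : List A, l ≠ [] ∧ (∀ x ∈ l, x ∈ h) ∧ a = l.prod} with hS
  -- products of nonempty lists of elements of h lie in m
  have L0 : ∀ l : List A, l ≠ [] → (∀ z ∈ l, z ∈ h) → l.prod ∈ m := by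
    intro l
    induction l with
    | nil => simp
    | cons Y r IH =>
      intro _ hall
      rcases eq_or_ne r [] with rfl | hr
      · simpa using hhm (hall Y (by simp))
      · rw [List.prod_cons]
        exact hmul Y (hhm (hall Y (by simp))) r.prod
          (IH hr fun z hz => hall z (by simp [hz]))
  -- elements of h commute with products up to a multiple of t
  have L1 : ∀ X ∈ h, ∀ l : List A, l ≠ [] → (∀ z ∈ l, z ∈ h) →
      ∃ c : ℂ, X * l.prod = l.prod * X + c • t := by
    intro X hX l
    induction l with
    | nil => simp
    | cons Y r IH =>
      intro _ hall
      have hY : Y ∈ h := hall Y (by simp)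
      obtain ⟨c, hc⟩ := hbr X hX Y hY
      have hXY : X * Y = Y * X + c • t := by
        have := hc; rw [sub_eq_iff_eq_add] at this; rw [this, add_comm]
      rcases eq_or_ne r [] with rfl | hr
      · exact ⟨c, by simpa using hXY⟩
      · obtain ⟨d, hd⟩ := IH hr (fun z hz => hall z (by simp [hz]))
        have hrm : r.prod ∈ m := L0 r hr (fun z hz => hall z (by simp [hz]))
        have h1 : t * r.prod = 0 := (ht _ hrm).1
        have h2 : Y * t = 0 := (ht Y (hhm hY)).2
        refine ⟨0, ?_⟩
        rw [List.prod_cons]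
        calc X * (Y * r.prod) = (Y * X + c • t) * r.prod := by rw [← mul_assoc, hXY]
          _ = Y * (X * r.prod) + c • (t * r.prod) := by
              rw [add_mul, mul_assoc, smul_mul_assoc]
          _ = Y * (r.prod * X + d • t) := by rw [h1, smul_zero, add_zero, hd]
          _ = (Y * r.prod) * X + d • (Y * t) := by
              rw [mul_add, ← mul_assoc, mul_smul_comm]
          _ = Y * r.prod * X + (0 : ℂ) • t := by
              rw [h2, smul_zero, zero_smul]
  -- products of length ≥ 2 commute with elements of h
  have L2 : ∀ X ∈ h, ∀ l : List A, 2 ≤ l.length → (∀ z ∈ l, z ∈ h) →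
      X * l.prod = l.prod * X := by
    intro X hX l hlen hall
    cases l with
    | nil => simp at hlen
    | cons Y r =>
      have hr : r ≠ [] := by
        rintro rfl; simp at hlen
      have hY : Y ∈ h := hall Y (by simp)
      obtain ⟨c, hc⟩ := hbr X hX Y hY
      have hXY : X * Y = Y * X + c • t := by
        have := hc; rw [sub_eq_iff_eq_add] at this; rw [this, add_comm]
      obtain ⟨d, hd⟩ := L1 X hX r hr (fun z hz => hall z (by simp [hz]))
      have hrm : r.prod ∈ m := L0 r hr (fun z hz => hall z (by simp [hz]))
      have h1 : t * r.prod = 0 := (ht _ hrm).1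
      have h2 : Y * t = 0 := (ht Y (hhm hY)).2
      rw [List.prod_cons]
      calc X * (Y * r.prod) = (Y * X + c • t) * r.prod := by rw [← mul_assoc, hXY]
        _ = Y * (X * r.prod) + c • (t * r.prod) := by
            rw [add_mul, mul_assoc, smul_mul_assoc]
        _ = Y * (r.prod * X + d • t) := by rw [h1, smul_zero, add_zero, hd]
        _ = (Y * r.prod) * X + d • (Y * t) := by
            rw [mul_add, ← mul_assoc, mul_smul_comm]
        _ = Y * r.prod * X := by rw [h2, smul_zero, add_zero]
  intro x hx y hy a
  -- x * y commutes with every element of h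
  have key : ∀ X ∈ h, (x * y) * X = X * (x * y) := by
    intro X hX
    have hz : x * y ∈ Submodule.span ℂ (S * S) := by
      rw [← Submodule.span_mul_span]
      exact Submodule.mul_mem_mul (hgen hx) (hgen hy)
    refine Submodule.span_induction ?_ (by simp) ?_ ?_ hz
    · rintro s hs
      rw [Set.mem_mul] at hs
      obtain ⟨p, hp, q, hq, rfl⟩ := hs
      obtain ⟨l1, hl1, hall1, rfl⟩ := hp
      obtain ⟨l2, hl2, hall2, rfl⟩ := hq
      have happ : l1.prod * l2.prod = (l1 ++ l2).prod := (List.prod_append).symm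
      rw [happ]
      have hlen : 2 ≤ (l1 ++ l2).length := by
        rw [List.length_append]
        have h1 : 1 ≤ l1.length := List.length_pos_iff.mpr hl1
        have h2 : 1 ≤ l2.length := List.length_pos_iff.mpr hl2
        omega
      have hall : ∀ z ∈ l1 ++ l2, z ∈ h := by
        intro z hz
        rcases List.mem_append.mp hz with hz | hz
        · exact hall1 z hz
        · exact hall2 z hz
      exact (L2 X hX (l1 ++ l2) hlen hall).symm
    · intro u v _ _ hu hv
      rw [add_mul, mul_add, hu, hv]
    · intro c u _ hu
      rw [smul_mul_assoc, mul_smul_comm, hu]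
  -- hence with every product of a list of elements of h
  have key2 : ∀ l : List A, (∀ z ∈ l, z ∈ h) → (x * y) * l.prod = l.prod * (x * y) := by
    intro l
    induction l with
    | nil => simp
    | cons Y r IH =>
      intro hall
      rw [List.prod_cons, ← mul_assoc, key Y (hall Y (by simp)), mul_assoc,
        IH (fun z hz => hall z (by simp [hz])), ← mul_assoc]
  -- hence with every element of m
  have key3 : ∀ w ∈ m, (x * y) * w = w * (x * y) := by
    intro w hw
    refine Submodule.span_induction ?_ (by simp) ?_ ?_ (hgen hw)
    · rintro s ⟨l, _, hall, rfl⟩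
      exact key2 l hall
    · intro u v _ _ hu hv
      rw [add_mul, mul_add, hu, hv]
    · intro c u _ hu
      rw [smul_mul_assoc, mul_smul_comm, hu]
  obtain ⟨c, hc⟩ := hdec a
  have ha : a = c • (1 : A) + (a - c • (1 : A)) := by abel
  rw [ha, mul_add, add_mul, key3 _ hc, mul_smul_comm, smul_mul_assoc, mul_one, one_mul]
end

section
/- Let M = {M ∈ Mat_{2n}(ℂ) : M − Mᵗ = Ω} modulo the equivalence M₁ ~ M₂ iff M₁ = C M₂ Cᵗ for some C ∈ GL_{2n}(ℂ), and let S be the set of orbits of Sp(Ω) acting on symmetric 2n×2n matrices by (C,N) ↦ C N Cᵗ. Then the map [M] ↦ [½(M+Mᵗ)] is a well-defined bijection from M to S. -/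
open Matrix

/-- The standard skew-symmetric (symplectic) matrix `Ω = [[0, I], [-I, 0]]`. -/
def stdOmega (n : ℕ) : Matrix (Fin (2 * n)) (Fin (2 * n)) ℂ :=
  fun i j => if (i : ℕ) + n = (j : ℕ) then 1 else if (j : ℕ) + n = (i : ℕ) then -1 else 0

/-- Congruence relation on matrices `M` with `M - Mᵗ = Ω`. -/
def mRel (n : ℕ) (M₁ M₂ : {M : Matrix (Fin (2 * n)) (Fin (2 * n)) ℂ // M - Mᵀ = stdOmega n}) :
    Prop :=
  ∃ C : Matrix (Fin (2 * n)) (Fin (2 * n)) ℂ, IsUnit C ∧ M₁.1 = C * M₂.1 * Cᵀ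

/-- The `Sp(Ω)`-congruence relation on symmetric matrices. -/
def sRel (n : ℕ) (N₁ N₂ : {N : Matrix (Fin (2 * n)) (Fin (2 * n)) ℂ // Nᵀ = N}) : Prop :=
  ∃ C : Matrix (Fin (2 * n)) (Fin (2 * n)) ℂ,
    IsUnit C ∧ C * stdOmega n * Cᵀ = stdOmega n ∧ N₁.1 = C * N₂.1 * Cᵀ

/-!
Write `M = ½(M + Mᵗ) + ½(M - Mᵗ)`. On matrices with `M - Mᵗ = Ω` the symmetric part is a
bijection onto the symmetric matrices, with inverse `N ↦ N + ½Ω`. Congruence `M ↦ C M Cᵗ`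
commutes with taking symmetric and skew parts, so `M₁ = C M₂ Cᵗ` holds exactly when `C` fixes
the common skew part `Ω` and carries the symmetric part of `M₂` to that of `M₁`: the two
equivalence relations correspond under the bijection.
-/

namespace Matrix

section Congruence

variable {m R : Type*} [Fintype m] [CommRing R]

lemma transpose_mul_mul_transpose (C M : Matrix m m R) : (C * M * Cᵀ)ᵀ = C * Mᵀ * Cᵀ := by
  rw [transpose_mul, transpose_mul, transpose_transpose, Matrix.mul_assoc]

lemma mul_mul_transpose_sub_transpose (C M : Matrix m m R) :
    C * M * Cᵀ - (C * M * Cᵀ)ᵀ = C * (M - Mᵀ) * Cᵀ := by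
  rw [transpose_mul_mul_transpose, Matrix.mul_sub, Matrix.sub_mul]

end Congruence

variable {m K : Type*} [Field K]

def symmPart (M : Matrix m m K) : Matrix m m K := (1 / 2 : K) • (M + Mᵀ)

lemma symmPart_transpose (M : Matrix m m K) : (symmPart M)ᵀ = symmPart M := by
  rw [symmPart, transpose_smul, transpose_add, transpose_transpose, add_comm]

lemma symmPart_mul_mul_transpose [Fintype m] (C M : Matrix m m K) :
    symmPart (C * M * Cᵀ) = C * symmPart M * Cᵀ := by
  rw [symmPart, symmPart, transpose_mul_mul_transpose, Matrix.mul_smul, Matrix.smul_mul,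
    Matrix.mul_add, Matrix.add_mul]

variable [NeZero (2 : K)]

lemma symmPart_add_half_smul_sub_transpose (M : Matrix m m K) :
    symmPart M + (1 / 2 : K) • (M - Mᵀ) = M := by
  rw [symmPart, ← smul_add, add_add_sub_cancel, ← two_smul K, smul_smul,
    one_div_mul_cancel two_ne_zero, one_smul]

lemma eq_symmPart_add_half_smul {A M : Matrix m m K} (hM : M - Mᵀ = A) :
    M = symmPart M + (1 / 2 : K) • A := by
  rw [← hM, symmPart_add_half_smul_sub_transpose]

lemma symmPart_add_half_smul {A N : Matrix m m K} (hA : Aᵀ = -A) (hN : Nᵀ = N) :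
    symmPart (N + (1 / 2 : K) • A) = N := by
  rw [symmPart, transpose_add, transpose_smul, hA, hN]
  match_scalars <;> field_simp <;> ring

lemma add_half_smul_sub_transpose {A N : Matrix m m K} (hA : Aᵀ = -A) (hN : Nᵀ = N) :
    N + (1 / 2 : K) • A - (N + (1 / 2 : K) • A)ᵀ = A := by
  rw [transpose_add, transpose_smul, hA, hN]
  match_scalars <;> field_simp <;> ring

def symmPartEquiv {A : Matrix m m K} (hA : Aᵀ = -A) :
    {M : Matrix m m K // M - Mᵀ = A} ≃ {N : Matrix m m K // Nᵀ = N} where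
  toFun M := ⟨symmPart M.1, symmPart_transpose M.1⟩
  invFun N := ⟨N.1 + (1 / 2 : K) • A, add_half_smul_sub_transpose hA N.2⟩
  left_inv M := Subtype.ext (eq_symmPart_add_half_smul M.2).symm
  right_inv N := Subtype.ext <| symmPart_add_half_smul hA N.2

theorem eq_mul_mul_transpose_iff [Fintype m] {A M₁ M₂ C : Matrix m m K} (h₁ : M₁ - M₁ᵀ = A)
    (h₂ : M₂ - M₂ᵀ = A) :
    M₁ = C * M₂ * Cᵀ ↔ C * A * Cᵀ = A ∧ symmPart M₁ = C * symmPart M₂ * Cᵀ := by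
  constructor
  · rintro rfl
    rw [mul_mul_transpose_sub_transpose, h₂] at h₁
    exact ⟨h₁, symmPart_mul_mul_transpose C M₂⟩
  · rintro ⟨hA, hS⟩
    calc M₁ = symmPart M₁ + (1 / 2 : K) • A := eq_symmPart_add_half_smul h₁
      _ = C * (symmPart M₂ + (1 / 2 : K) • A) * Cᵀ := by
          rw [hS, Matrix.mul_add, Matrix.add_mul, Matrix.mul_smul, Matrix.smul_mul, hA]
      _ = C * M₂ * Cᵀ := by rw [← eq_symmPart_add_half_smul h₂]

end Matrix

lemma stdOmega_transpose (n : ℕ) : (stdOmega n)ᵀ = -stdOmega n := by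
  ext i j
  simp only [transpose_apply, Matrix.neg_apply, stdOmega]
  split_ifs <;> first | omega | norm_num

/-- Taking the symmetric part `[M] ↦ [½(M + Mᵗ)]` gives a
well-defined bijection from the set of congruence classes of matrices with
`M - Mᵗ = Ω` to the set of `Sp(Ω)`-orbits of symmetric matrices. -/
theorem symmetric_part_bijection (n : ℕ) :
    ∃ F : Quot (mRel n) → Quot (sRel n),
      Function.Bijective F ∧
      ∀ M : {M : Matrix (Fin (2 * n)) (Fin (2 * n)) ℂ // M - Mᵀ = stdOmega n},
        F (Quot.mk (mRel n) M) =
          Quot.mk (sRel n) ⟨(1/2 : ℂ) • (M.1 + M.1ᵀ), by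
            rw [Matrix.transpose_smul, Matrix.transpose_add, Matrix.transpose_transpose,
              add_comm]⟩ :=
  ⟨Quot.congr (symmPartEquiv (stdOmega_transpose n)) fun M₁ M₂ =>
      exists_congr fun _ => and_congr_right fun _ => eq_mul_mul_transpose_iff M₁.2 M₂.2,
    Equiv.bijective _, fun _ => rfl⟩
end

section
/- The action of Sp(Ω) on the space Sym_{2n}(ℂ) of symmetric 2n×2n complex matrices by (C,N) ↦ C N Cᵗ has infinitely many orbits (n ≥ 1). -/
open Matrix

/-- `Ω² = -1`. -/
lemma omega_sq (n : ℕ) : stdOmega n * stdOmega n = -1 := by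
  ext i j
  rw [Matrix.mul_apply, Matrix.neg_apply, Matrix.one_apply]
  have hj := j.isLt
  have hi := i.isLt
  by_cases h : (i : ℕ) < n
  · rw [Finset.sum_eq_single (⟨(i:ℕ) + n, by omega⟩ : Fin (2*n))]
    · simp only [stdOmega, Fin.ext_iff]
      split_ifs <;> first | (exfalso; omega) | norm_num
    · intro k _ hk
      have hk2 : (k:ℕ) ≠ (i:ℕ) + n := by simpa [Fin.ext_iff] using hk
      have hkl := k.isLt
      simp only [stdOmega]
      split_ifs <;> first | (exfalso; omega) | norm_num
    · intro h'; exact absurd (Finset.mem_univ _) h'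
  · rw [Finset.sum_eq_single (⟨(i:ℕ) - n, by omega⟩ : Fin (2*n))]
    · simp only [stdOmega, Fin.ext_iff]
      split_ifs <;> first | (exfalso; omega) | norm_num
    · intro k _ hk
      have hk2 : (k:ℕ) ≠ (i:ℕ) - n := by simpa [Fin.ext_iff] using hk
      have hkl := k.isLt
      simp only [stdOmega]
      split_ifs <;> first | (exfalso; omega) | norm_num
    · intro h'; exact absurd (Finset.mem_univ _) h'

/-- If `C Ω Cᵀ = Ω` with `C` invertible, then also `Cᵀ Ω C = Ω`. -/
lemma sp_transpose (n : ℕ) (C : Matrix (Fin (2*n)) (Fin (2*n)) ℂ) (hCu : IsUnit C)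
    (hC : C * stdOmega n * Cᵀ = stdOmega n) : Cᵀ * stdOmega n * C = stdOmega n := by
  set Ω := stdOmega n with hΩ
  have hdet : IsUnit C.det := (Matrix.isUnit_iff_isUnit_det C).1 hCu
  have hinv : C⁻¹ * C = 1 := Matrix.nonsing_inv_mul C hdet
  have hΩ2 : Ω * Ω = -1 := omega_sq n
  have hCt : Cᵀ = (-Ω) * (C⁻¹ * Ω) := by
    have h1 : Ω * Cᵀ = C⁻¹ * Ω := by
      calc Ω * Cᵀ = (C⁻¹ * C) * Ω * Cᵀ := by rw [hinv, one_mul]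
        _ = C⁻¹ * (C * Ω * Cᵀ) := by rw [mul_assoc, mul_assoc, mul_assoc]
        _ = C⁻¹ * Ω := by rw [hC]
    calc Cᵀ = ((-Ω) * Ω) * Cᵀ := by rw [show (-Ω) * Ω = 1 by rw [neg_mul, hΩ2]; simp, one_mul]
      _ = (-Ω) * (Ω * Cᵀ) := by rw [mul_assoc]
      _ = (-Ω) * (C⁻¹ * Ω) := by rw [h1]
  calc Cᵀ * Ω * C = (-Ω) * (C⁻¹ * Ω) * Ω * C := by rw [hCt]
    _ = (-Ω) * C⁻¹ * (Ω * Ω) * C := by noncomm_ring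
    _ = (-Ω) * C⁻¹ * (-1) * C := by rw [hΩ2]
    _ = Ω * (C⁻¹ * C) := by noncomm_ring
    _ = Ω := by rw [hinv, mul_one]

/-- `trace (N Ω N Ω)` is an invariant of symplectic congruence. -/
lemma trace_inv (n : ℕ) (N₁ N₂ C : Matrix (Fin (2*n)) (Fin (2*n)) ℂ) (hCu : IsUnit C)
    (hC : C * stdOmega n * Cᵀ = stdOmega n) (hN : N₁ = C * N₂ * Cᵀ) :
    Matrix.trace (N₁ * stdOmega n * N₁ * stdOmega n)
      = Matrix.trace (N₂ * stdOmega n * N₂ * stdOmega n) := by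
  set Ω := stdOmega n with hΩ
  have hsp := sp_transpose n C hCu hC
  have e1 : N₁ * Ω * N₁ * Ω = C * (N₂ * Ω * N₂ * (Cᵀ * Ω)) := by
    rw [hN]
    calc C * N₂ * Cᵀ * Ω * (C * N₂ * Cᵀ) * Ω
        = C * (N₂ * (Cᵀ * Ω * C) * N₂ * (Cᵀ * Ω)) := by noncomm_ring
      _ = C * (N₂ * Ω * N₂ * (Cᵀ * Ω)) := by rw [hsp]
  rw [e1, Matrix.trace_mul_comm]
  congr 1
  calc N₂ * Ω * N₂ * (Cᵀ * Ω) * C = N₂ * Ω * N₂ * (Cᵀ * Ω * C) := by noncomm_ring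
    _ = N₂ * Ω * N₂ * Ω := by rw [hsp]

/-- For `n ≥ 1`, the congruence action of `Sp(Ω)` on symmetric
`2n × 2n` complex matrices has infinitely many orbits. -/
theorem infinitely_many_sp_orbits (n : ℕ) (hn : 1 ≤ n) :
    Infinite (Quot (sRel n)) := by
  set Ω := stdOmega n with hΩ
  have Fresp : ∀ N₁ N₂, sRel n N₁ N₂ →
      Matrix.trace (N₁.1 * Ω * N₁.1 * Ω) = Matrix.trace (N₂.1 * Ω * N₂.1 * Ω) := by
    rintro N₁ N₂ ⟨C, hCu, hC, hN⟩
    exact trace_inv n N₁.1 N₂.1 C hCu hC hN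
  let F : Quot (sRel n) → ℂ :=
    Quot.lift (fun N => Matrix.trace (N.1 * Ω * N.1 * Ω)) Fresp
  let g : ℕ → Quot (sRel n) := fun k =>
    Quot.mk _ ⟨(k : ℂ) • (1 : Matrix (Fin (2*n)) (Fin (2*n)) ℂ), by simp⟩
  have hFg : ∀ k : ℕ, F (g k) = -((k : ℂ) * k * (2 * n)) := by
    intro k
    show Matrix.trace ((k:ℂ) • 1 * Ω * ((k:ℂ) • 1) * Ω) = _
    have : (k:ℂ) • (1 : Matrix (Fin (2*n)) (Fin (2*n)) ℂ) * Ω * ((k:ℂ) • 1) * Ω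
        = ((k:ℂ) * k) • (Ω * Ω) := by
      simp [smul_mul_assoc, mul_smul_comm, smul_smul]
    rw [this, omega_sq, Matrix.trace_smul, Matrix.trace_neg, Matrix.trace_one]
    push_cast [Fintype.card_fin]
    rw [smul_eq_mul]
    ring
  refine Infinite.of_injective g ?_
  intro a b hab
  have h1 : F (g a) = F (g b) := by rw [hab]
  rw [hFg, hFg] at h1
  have hnne : ((n : ℂ)) ≠ 0 := Nat.cast_ne_zero.mpr (by omega)
  have h1' : (a:ℂ) * a * (2 * n) = (b:ℂ) * b * (2 * n) := neg_injective h1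
  have h2 : (a : ℂ) * a = (b : ℂ) * b :=
    mul_right_cancel₀ (mul_ne_zero two_ne_zero hnne) h1'
  have h3 : ((a * a : ℕ) : ℂ) = ((b * b : ℕ) : ℂ) := by push_cast; exact h2
  have h4 : a * a = b * b := Nat.cast_injective h3
  exact Nat.mul_self_inj.mp h4
end

section
/- Given any M = (a_{ij}) ∈ Mat_{2n}(ℂ) with M − Mᵗ = Ω (the standard skew-symmetric matrix), define X_i = E_{1,i+1} + Σ_{l=1}^{2n} a_{li} E_{l+1,2n+2} ∈ Mat_{2n+2}(ℂ) for 1 ≤ i ≤ 2n, and t = E_{1,2n+2}. Then X_i·X_j = a_{ij} t, t·X_i = X_i·t = t² = 0, and the span of {t, X₁, …, X_{2n}} is closed under multiplication with all triple products zero; hence A = ℂ·I ⊕ span{t, X₁,…,X_{2n}} is a local unital associative subalgebra of Mat_{2n+2}(ℂ) of dimension 2n+2. -/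
open Matrix

/-- `t = E_{1,2n+2}` (in 1-based indexing) in `Mat_{2n+2}(ℂ)`. -/
def tmat (n : ℕ) : Matrix (Fin (2 * n + 2)) (Fin (2 * n + 2)) ℂ :=
  Matrix.single ⟨0, by omega⟩ ⟨2 * n + 1, by omega⟩ 1

/-- `X_i = E_{1,i+1} + Σ_l a_{li} E_{l+1,2n+2}` (1-based indexing). -/
noncomputable def Xmat (n : ℕ) (M : Matrix (Fin (2 * n)) (Fin (2 * n)) ℂ) (i : Fin (2 * n)) :
    Matrix (Fin (2 * n + 2)) (Fin (2 * n + 2)) ℂ :=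
  Matrix.single ⟨0, by omega⟩ ⟨(i : ℕ) + 1, by have := i.isLt; omega⟩ 1 +
    ∑ l : Fin (2 * n), M l i •
      Matrix.single ⟨(l : ℕ) + 1, by have := l.isLt; omega⟩ ⟨2 * n + 1, by omega⟩ 1

/-! With `p = 0`, `q = 2n+1` and `e l = l + 1` (0-based), `t = E_{pq}` and
`X_i = E_{p,e i} + ∑ₗ a_{li} E_{e l,q}`. As `E_{ab} E_{cd} = δ_{bc} E_{ad}` and the indices
`p`, `q`, `e l` are pairwise distinct, the only products of these elementary matrices that
survive are `E_{p,e i} E_{e j,q} = δ_{ij} t`; hence `X_i X_j = a_{ij} t` and every other product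
vanishes.
For the dimension, row `p` of `X_i` is the `e i`-th unit row, the entry `(p, q)` vanishes on
all `X_i` but not on `t`, and the entry `(p, p)` vanishes on `t` and all `X_i` but not on `1`. -/

namespace Matrix

variable {m n : Type*} [Fintype m] [DecidableEq n]

noncomputable def tautologicalGenerator {R : Type*} [Semiring R] (p q : n) (e : m → n)
    (M : Matrix m m R) (i : m) : Matrix n n R :=
  single p (e i) 1 + ∑ l, single (e l) q (M l i)

variable {p q : n} {e : m → n}

theorem tautologicalGenerator_apply_left {R : Type*} [Semiring R] (M : Matrix m m R)
    (hp : ∀ l, e l ≠ p) (i : m) (b : n) :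
    tautologicalGenerator p q e M i p b = single p (e i) 1 p b := by
  simp [tautologicalGenerator, sum_apply, single_apply, hp]

section Semiring

variable [Fintype n] {R : Type*} [Semiring R] (M : Matrix m m R)

theorem single_mul_tautologicalGenerator (hpq : p ≠ q) (hq : ∀ l, e l ≠ q) (a : n) (c : R)
    (i : m) : single a q c * tautologicalGenerator p q e M i = 0 := by
  simp [tautologicalGenerator, mul_add, Finset.mul_sum, hpq.symm, (hq _).symm]

theorem tautologicalGenerator_mul_single (hpq : p ≠ q) (hp : ∀ l, e l ≠ p) (c : R) (i : m) :
    tautologicalGenerator p q e M i * single p q c = 0 := by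
  simp [tautologicalGenerator, add_mul, Finset.sum_mul, hpq.symm, hp]

theorem tautologicalGenerator_mul_tautologicalGenerator (hpq : p ≠ q) (hp : ∀ l, e l ≠ p)
    (hq : ∀ l, e l ≠ q) (he : Function.Injective e) (i j : m) :
    tautologicalGenerator p q e M i * tautologicalGenerator p q e M j = M i j • single p q 1 := by
  simp only [tautologicalGenerator, add_mul, mul_add, Finset.sum_mul, Finset.mul_sum,
    single_mul_single_of_ne _ _ _ _ (hp _), single_mul_single_of_ne _ _ _ _ hpq.symm,
    single_mul_single_of_ne _ _ _ _ (hq _).symm, Finset.sum_const_zero, add_zero, zero_add]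
  rw [Finset.sum_eq_single i (fun k _ hk => single_mul_single_of_ne _ _ _ _ (he.ne hk.symm) _)
    (by simp), single_mul_single_same, one_mul, smul_single, smul_eq_mul, mul_one]

end Semiring

theorem mul_mem_span_tautologicalGenerator [Fintype n] {R : Type*} [CommSemiring R]
    (M : Matrix m m R)
    (hpq : p ≠ q) (hp : ∀ l, e l ≠ p) (hq : ∀ l, e l ≠ q) (he : Function.Injective e)
    {x y : Matrix n n R}
    (hx : x ∈ Submodule.span R
      (insert 1 (insert (single p q 1) (Set.range (tautologicalGenerator p q e M)))))
    (hy : y ∈ Submodule.span R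
      (insert 1 (insert (single p q 1) (Set.range (tautologicalGenerator p q e M))))) :
    x * y ∈ Submodule.span R
      (insert 1 (insert (single p q 1) (Set.range (tautologicalGenerator p q e M)))) := by
  set S := insert 1 (insert (single p q 1) (Set.range (tautologicalGenerator p q e M)))
  have h1 : 1 ∈ Submodule.span R S := Submodule.subset_span (by simp [S])
  have hX (i : m) : tautologicalGenerator p q e M i ∈ Submodule.span R S :=
    Submodule.subset_span (by simp [S])
  have ht (c : R) : single p q c ∈ Submodule.span R S := by
    simpa [smul_single] using Submodule.smul_mem _ c
      (Submodule.subset_span (R := R) (s := S) (Set.mem_insert_of_mem _ (Set.mem_insert _ _)))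
  refine Submodule.mul_le.mp ?_ x hx y hy
  rw [Submodule.span_mul_span, Submodule.span_le, Set.mul_subset_iff]
  rintro u (rfl | rfl | ⟨i, rfl⟩) v (rfl | rfl | ⟨j, rfl⟩) <;>
    simp [single_mul_tautologicalGenerator, tautologicalGenerator_mul_single,
      tautologicalGenerator_mul_tautologicalGenerator, hpq.symm, hpq, hp, hq, he, h1, hX, ht]

section Independence

variable {R : Type*} [Semiring R] (M : Matrix m m R)

theorem linearIndependent_tautologicalGenerator [DecidableEq m] (hp : ∀ l, e l ≠ p)
    (he : Function.Injective e) : LinearIndependent R (tautologicalGenerator p q e M) := by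
  refine LinearIndependent.of_comp (LinearMap.pi fun j => entryLinearMap R R p (e j)) ?_
  have hrow : (LinearMap.pi fun j => entryLinearMap R R p (e j)) ∘ tautologicalGenerator p q e M =
      fun i => Pi.single i 1 := by
    ext i j
    simp [tautologicalGenerator_apply_left M hp, single_apply, Pi.single_apply, he.eq_iff, eq_comm]
  rw [hrow]
  exact Pi.linearIndependent_single_one m R

variable [Nontrivial R]

theorem single_notMem_span_range_tautologicalGenerator (hp : ∀ l, e l ≠ p)
    (hq : ∀ l, e l ≠ q) :
    single p q 1 ∉ Submodule.span R (Set.range (tautologicalGenerator p q e M)) := by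
  intro h
  have hker : Set.range (tautologicalGenerator p q e M) ⊆
      LinearMap.ker (entryLinearMap R R p q) := by
    rintro _ ⟨i, rfl⟩
    simp [tautologicalGenerator_apply_left M hp, hq]
  simpa using Submodule.span_le.mpr hker h

theorem one_notMem_span_insert_single_tautologicalGenerator (hpq : p ≠ q)
    (hp : ∀ l, e l ≠ p) :
    1 ∉ Submodule.span R
      (insert (single p q 1) (Set.range (tautologicalGenerator p q e M))) := by
  intro h
  have hker : insert (single p q 1) (Set.range (tautologicalGenerator p q e M)) ⊆
      LinearMap.ker (entryLinearMap R R p p) := by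
    rintro _ (rfl | ⟨i, rfl⟩)
    · simp [hpq.symm]
    · simp [tautologicalGenerator_apply_left M hp, hp]
  simpa using Submodule.span_le.mpr hker h

end Independence

theorem finrank_span_one_single_tautologicalGenerator {K : Type*} [Field K] {k : ℕ}
    {e : Fin k → n} (M : Matrix (Fin k) (Fin k) K) (hpq : p ≠ q) (hp : ∀ l, e l ≠ p)
    (hq : ∀ l, e l ≠ q) (he : Function.Injective e) :
    Module.finrank K (Submodule.span K
      (insert 1 (insert (single p q 1) (Set.range (tautologicalGenerator p q e M))))) = k + 2 := by
  have hli : LinearIndependent K (Fin.cons 1 (Fin.cons (single p q 1)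
      (tautologicalGenerator p q e M)) : Fin (k + 2) → Matrix n n K) := by
    refine ((linearIndependent_tautologicalGenerator M hp he).finCons
      (single_notMem_span_range_tautologicalGenerator M hp hq)).finCons ?_
    rw [Fin.range_cons]
    exact one_notMem_span_insert_single_tautologicalGenerator M hpq hp
  rw [← Fin.range_cons, ← Fin.range_cons, finrank_span_eq_card hli, Fintype.card_fin]

end Matrix

theorem tmat_eq_single (n : ℕ) : tmat n = single 0 (Fin.last (2 * n + 1)) 1 :=
  rfl

theorem Xmat_eq_tautologicalGenerator (n : ℕ) (M : Matrix (Fin (2 * n)) (Fin (2 * n)) ℂ) :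
    Xmat n M = tautologicalGenerator 0 (Fin.last (2 * n + 1)) (fun l => l.castSucc.succ) M := by
  ext1 i
  simp only [Xmat, tautologicalGenerator, smul_single, smul_eq_mul, mul_one]
  rfl

theorem tautological_algebra_construction_general
    (n : ℕ) (M : Matrix (Fin (2 * n)) (Fin (2 * n)) ℂ) :
    (∀ i j : Fin (2 * n), Xmat n M i * Xmat n M j = M i j • tmat n) ∧
    (∀ i : Fin (2 * n), tmat n * Xmat n M i = 0 ∧ Xmat n M i * tmat n = 0) ∧
    (tmat n * tmat n = 0) ∧
    (∀ i j k : Fin (2 * n), Xmat n M i * Xmat n M j * Xmat n M k = 0) ∧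
    (∀ x ∈ Submodule.span ℂ
        (insert (1 : Matrix (Fin (2 * n + 2)) (Fin (2 * n + 2)) ℂ)
          (insert (tmat n) (Set.range (Xmat n M)))),
      ∀ y ∈ Submodule.span ℂ
        (insert (1 : Matrix (Fin (2 * n + 2)) (Fin (2 * n + 2)) ℂ)
          (insert (tmat n) (Set.range (Xmat n M)))),
      x * y ∈ Submodule.span ℂ
        (insert (1 : Matrix (Fin (2 * n + 2)) (Fin (2 * n + 2)) ℂ)
          (insert (tmat n) (Set.range (Xmat n M))))) ∧
    Module.finrank ℂ
      ↥(Submodule.span ℂ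
        (insert (1 : Matrix (Fin (2 * n + 2)) (Fin (2 * n + 2)) ℂ)
          (insert (tmat n) (Set.range (Xmat n M))))) = 2 * n + 2 := by
  have hpq : (0 : Fin (2 * n + 2)) ≠ Fin.last (2 * n + 1) := Fin.last_pos.ne
  have hp (l : Fin (2 * n)) : l.castSucc.succ ≠ 0 := Fin.succ_ne_zero _
  have hq (l : Fin (2 * n)) : l.castSucc.succ ≠ Fin.last (2 * n + 1) := by
    rw [← Fin.castSucc_succ]
    exact Fin.castSucc_ne_last _
  have he : Function.Injective fun l : Fin (2 * n) => l.castSucc.succ :=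
    (Fin.succ_injective _).comp (Fin.castSucc_injective _)
  have hXX := tautologicalGenerator_mul_tautologicalGenerator M hpq hp hq he
  rw [tmat_eq_single, Xmat_eq_tautologicalGenerator]
  refine ⟨hXX, fun i => ⟨single_mul_tautologicalGenerator M hpq hq _ _ i,
    tautologicalGenerator_mul_single M hpq hp _ i⟩, single_mul_single_of_ne _ _ _ _ hpq.symm _,
    fun i j k => ?_, fun x hx y hy => mul_mem_span_tautologicalGenerator M hpq hp hq he hx hy,
    finrank_span_one_single_tautologicalGenerator M hpq hp hq he⟩
  rw [hXX, smul_mul_assoc, single_mul_tautologicalGenerator M hpq hq, smul_zero]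

/-- For any `M` with `M - Mᵗ = Ω`, the matrices `X_i` and `t`
satisfy `X_i·X_j = a_{ij}·t`, `t·X_i = X_i·t = t² = 0`, all triple products
vanish, the span of `1, t, X₁, …, X_{2n}` is closed under multiplication, and
the resulting unital subalgebra `A = ℂ·I ⊕ span{t, X₁,…,X_{2n}}` has
dimension `2n+2`. -/
theorem tautological_algebra_construction
    (n : ℕ) (M : Matrix (Fin (2 * n)) (Fin (2 * n)) ℂ)
    (hM : M - Mᵀ = stdOmega n) :
    (∀ i j : Fin (2 * n), Xmat n M i * Xmat n M j = M i j • tmat n) ∧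
    (∀ i : Fin (2 * n), tmat n * Xmat n M i = 0 ∧ Xmat n M i * tmat n = 0) ∧
    (tmat n * tmat n = 0) ∧
    (∀ i j k : Fin (2 * n), Xmat n M i * Xmat n M j * Xmat n M k = 0) ∧
    (∀ x ∈ Submodule.span ℂ
        (insert (1 : Matrix (Fin (2 * n + 2)) (Fin (2 * n + 2)) ℂ)
          (insert (tmat n) (Set.range (Xmat n M)))),
      ∀ y ∈ Submodule.span ℂ
        (insert (1 : Matrix (Fin (2 * n + 2)) (Fin (2 * n + 2)) ℂ)
          (insert (tmat n) (Set.range (Xmat n M)))),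
      x * y ∈ Submodule.span ℂ
        (insert (1 : Matrix (Fin (2 * n + 2)) (Fin (2 * n + 2)) ℂ)
          (insert (tmat n) (Set.range (Xmat n M))))) ∧
    Module.finrank ℂ
      ↥(Submodule.span ℂ
        (insert (1 : Matrix (Fin (2 * n + 2)) (Fin (2 * n + 2)) ℂ)
          (insert (tmat n) (Set.range (Xmat n M))))) = 2 * n + 2 :=
  tautological_algebra_construction_general n M
end

section
/- Let n ≥ 1, 0 ≤ k ≤ n, and in Mat_{2n+2}(ℂ) set X_i = E_{1,i+1}+E_{i+1,n+i+1} for 1 ≤ i ≤ k, X_j = E_{1,j+1} for k < j ≤ n, Y_i = E_{1,n+i+1}+E_{n−i+2,2n+2} for 1 ≤ i ≤ n, and t = E_{1,2n+2}. Then these 2n+1 elements span a Lie subalgebra isomorphic to the Heisenberg Lie algebra h_{2n+1} (with [X_i,Y_i] = t, all other brackets of basis elements zero, and t central). -/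
open Matrix

/-- The matrix unit `E_{a,b}` of `Mat_{2n+2}(ℂ)` in 1-based indexing:
the unique nonzero entry `1` sits at the (1-based) position `(a, b)`. -/
def Emat (n a b : ℕ) : Matrix (Fin (2 * n + 2)) (Fin (2 * n + 2)) ℂ :=
  fun p q => if (p : ℕ) + 1 = a ∧ (q : ℕ) + 1 = b then 1 else 0

/-- `X_i = E_{1,i+1} + E_{i+1,n+i+1}` for `1 ≤ i ≤ k`, `X_j = E_{1,j+1}` for `k < j ≤ n`. -/
def exX (n k i : ℕ) : Matrix (Fin (2 * n + 2)) (Fin (2 * n + 2)) ℂ :=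
  if i ≤ k then Emat n 1 (i + 1) + Emat n (i + 1) (n + i + 1) else Emat n 1 (i + 1)

/-- `Y_i = E_{1,n+i+1} + E_{n-i+2,2n+2}` for `1 ≤ i ≤ n`. -/
def exY (n i : ℕ) : Matrix (Fin (2 * n + 2)) (Fin (2 * n + 2)) ℂ :=
  Emat n 1 (n + i + 1) + Emat n (n - i + 2) (2 * n + 2)

/-- `t = E_{1,2n+2}`. -/
def exT (n : ℕ) : Matrix (Fin (2 * n + 2)) (Fin (2 * n + 2)) ℂ :=
  Emat n 1 (2 * n + 2)

/-! Pairing `X_{i+1}` with `Y_{n-i}` makes the generators a Heisenberg family `x, y, z` in the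
Lie algebra of matrices: `[x_i, y_j] = δ_{ij} z` and all other brackets vanish, which is read off
from `E_{ab} E_{cd} = δ_{bc} E_{ad}`. For any such family the map
`(a, b, c) ↦ ∑ aᵢ xᵢ + ∑ bᵢ yᵢ + c z` preserves brackets, and it is injective once `z ≠ 0`:
if it kills `(a, b, c)`, bracketing with `xᵢ` and with `yᵢ` gives `bᵢ z = aᵢ z = 0`, and then
`c z = 0`. -/

section HeisenbergFamily

variable {R L ι : Type*} [CommRing R] [LieRing L] [LieAlgebra R L]

variable (R) in
def heisenbergMap [Fintype ι] (x y : ι → L) (z : L) : (ι → R) × (ι → R) × R →ₗ[R] L :=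
  (Fintype.linearCombination R x).coprod
    ((Fintype.linearCombination R y).coprod (LinearMap.toSpanSingleton R L z))

@[simp]
theorem heisenbergMap_apply [Fintype ι] (x y : ι → L) (z : L) (v : (ι → R) × (ι → R) × R) :
    heisenbergMap R x y z v = ∑ i, v.1 i • x i + (∑ i, v.2.1 i • y i + v.2.2 • z) := by
  simp [heisenbergMap, Fintype.linearCombination_apply]

theorem range_heisenbergMap [Fintype ι] (x y : ι → L) (z : L) :
    LinearMap.range (heisenbergMap R x y z) =
      Submodule.span R ({z} ∪ Set.range x ∪ Set.range y) := by
  simp only [heisenbergMap, LinearMap.range_coprod, Fintype.range_linearCombination,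
    LinearMap.range_toSpanSingleton, Submodule.span_union]
  ac_rfl

structure IsHeisenbergFamily [DecidableEq ι] (x y : ι → L) (z : L) : Prop where
  lie_x_x : ∀ i j, ⁅x i, x j⁆ = 0
  lie_y_y : ∀ i j, ⁅y i, y j⁆ = 0
  lie_x_y : ∀ i j, ⁅x i, y j⁆ = if i = j then z else 0
  lie_x_z : ∀ i, ⁅x i, z⁆ = 0
  lie_y_z : ∀ i, ⁅y i, z⁆ = 0

namespace IsHeisenbergFamily

variable [Fintype ι] [DecidableEq ι] {x y : ι → L} {z : L}

theorem lie_heisenbergMap (h : IsHeisenbergFamily x y z) (v w : (ι → R) × (ι → R) × R) :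
    ⁅heisenbergMap R x y z v, heisenbergMap R x y z w⁆ =
      heisenbergMap R x y z (0, 0, ∑ i, (v.1 i * w.2.1 i - v.2.1 i * w.1 i)) := by
  have lie_y_x : ∀ i j, ⁅y i, x j⁆ = if j = i then -z else 0 := fun i j => by
    rw [← lie_skew, h.lie_x_y]
    split_ifs <;> simp
  have lie_z_x : ∀ i, ⁅z, x i⁆ = 0 := fun i => by rw [← lie_skew, h.lie_x_z, neg_zero]
  have lie_z_y : ∀ i, ⁅z, y i⁆ = 0 := fun i => by rw [← lie_skew, h.lie_y_z, neg_zero]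
  simp only [heisenbergMap_apply, lie_add, lie_sum, lie_smul, add_lie, sum_lie, smul_lie,
    h.lie_x_x, h.lie_y_y, h.lie_x_y, h.lie_x_z, h.lie_y_z, lie_y_x, lie_z_x, lie_z_y, lie_self,
    smul_zero, smul_ite, smul_neg, smul_smul, zero_smul, sub_smul, Finset.sum_const_zero,
    Finset.sum_ite_eq, Finset.sum_ite_eq', Finset.mem_univ, ↓reduceIte, Finset.sum_neg_distrib,
    Finset.sum_sub_distrib, Finset.sum_smul, Pi.zero_apply, add_zero, zero_add]
  simp only [mul_comm (w.1 _), mul_comm (w.2.1 _)]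
  abel

theorem injective_heisenbergMap [IsCancelMulZero R] [Module.IsTorsionFree R L]
    (h : IsHeisenbergFamily x y z) (hz : z ≠ 0) : Function.Injective (heisenbergMap R x y z) := by
  refine (injective_iff_map_eq_zero _).2 fun ⟨a, b, c⟩ hv => ?_
  have hb : b = 0 := funext fun i => by
    have := h.lie_heisenbergMap (Pi.single i 1, 0, 0) (a, b, c)
    simp only [hv, lie_zero, heisenbergMap_apply] at this
    simpa [Pi.single_apply, hz] using this.symm
  have ha : a = 0 := funext fun i => by
    have := h.lie_heisenbergMap (a, b, c) (0, Pi.single i 1, 0)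
    simp only [hv, zero_lie, heisenbergMap_apply] at this
    simpa [Pi.single_apply, hz] using this.symm
  obtain rfl : c = 0 := by simpa [ha, hb, hz] using hv
  rw [ha, hb]
  rfl

end IsHeisenbergFamily

end HeisenbergFamily

theorem Emat_mul (n a b c d : ℕ) :
    Emat n a b * Emat n c d = if b = c ∧ 1 ≤ b ∧ b ≤ 2 * n + 2 then Emat n a d else 0 := by
  split_ifs with h
  · obtain ⟨rfl, hb⟩ := h
    ext p q
    rw [mul_apply, Fintype.sum_eq_single ⟨b - 1, by omega⟩ fun r hr => ?_]
    · simp only [Emat, Nat.sub_add_cancel hb.1, and_true, true_and, ite_zero_mul_ite_zero, mul_one]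
    · have : (r : ℕ) + 1 ≠ b := fun h => hr (Fin.ext (by simp only; omega))
      simp [Emat, this]
  · ext p q
    rw [mul_apply, Matrix.zero_apply]
    refine Finset.sum_eq_zero fun r _ => ?_
    simp only [Emat, mul_ite, mul_one, mul_zero]
    split_ifs <;> first | rfl | omega

attribute [local instance] LieRing.ofAssociativeRing LieAlgebra.ofAssociativeAlgebra

theorem lie_exX_exX {n k i j : ℕ} (hi : 1 ≤ i) (hi' : i ≤ n) (hj : 1 ≤ j) (hj' : j ≤ n) :
    ⁅exX n k i, exX n k j⁆ = 0 := by
  rcases eq_or_ne i j with rfl | hij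
  · exact lie_self _
  rw [Ring.lie_def]
  unfold exX
  split_ifs <;> simp only [add_mul, mul_add, Emat_mul] <;> split_ifs <;> first | omega | simp

theorem lie_exX_exY {n k i j : ℕ} (hi : 1 ≤ i) (hi' : i ≤ n) (hj : 1 ≤ j) (hj' : j ≤ n) :
    ⁅exX n k i, exY n j⁆ = if i + j = n + 1 then exT n else 0 := by
  rw [Ring.lie_def]
  unfold exX exY exT
  split_ifs <;> simp only [add_mul, mul_add, Emat_mul] <;> split_ifs <;> first | omega | simp

theorem lie_exY_exY {n i j : ℕ} (hj : 1 ≤ j) (hj' : j ≤ n) :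
    ⁅exY n i, exY n j⁆ = 0 := by
  rw [Ring.lie_def]
  unfold exY
  simp only [add_mul, mul_add, Emat_mul]
  split_ifs <;> first | omega | simp

theorem lie_exX_exT {n k i : ℕ} (hi : 1 ≤ i) (hi' : i ≤ n) : ⁅exX n k i, exT n⁆ = 0 := by
  rw [Ring.lie_def]
  unfold exX exT
  split_ifs <;> simp only [add_mul, mul_add, Emat_mul] <;> split_ifs <;> first | omega | simp

theorem lie_exY_exT {n i : ℕ} (hi : i ≤ n) : ⁅exY n i, exT n⁆ = 0 := by
  rw [Ring.lie_def]
  unfold exY exT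
  simp only [add_mul, mul_add, Emat_mul]
  split_ifs <;> first | omega | simp

theorem exT_ne_zero (n : ℕ) : exT n ≠ 0 := fun h => by
  simpa [exT, Emat] using congrFun (congrFun h 0) (Fin.last _)

theorem isHeisenbergFamily_exX_exY (n k : ℕ) :
    IsHeisenbergFamily (fun i : Fin n => exX n k (i + 1)) (fun i : Fin n => exY n (n - i))
      (exT n) where
  lie_x_x i j := lie_exX_exX (by omega) (by omega) (by omega) (by omega)
  lie_y_y i j := lie_exY_exY (by omega) (by omega)
  lie_x_y i j := by
    rw [lie_exX_exY (by omega) (by omega) (by omega) (by omega)]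
    exact if_congr (by rw [Fin.ext_iff]; omega) rfl rfl
  lie_x_z i := lie_exX_exT (by omega) (by omega)
  lie_y_z i := lie_exY_exT (by omega)

theorem range_fin_add_one_eq_image_Icc {α : Type*} (f : ℕ → α) (n : ℕ) :
    Set.range (fun i : Fin n => f (i + 1)) = f '' Set.Icc 1 n := by
  ext x
  constructor
  · rintro ⟨i, rfl⟩
    exact ⟨i + 1, ⟨by omega, by omega⟩, rfl⟩
  · rintro ⟨j, ⟨hj, hj'⟩, rfl⟩
    exact ⟨⟨j - 1, by omega⟩, by simp only; congr; omega⟩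

theorem range_fin_sub_eq_image_Icc {α : Type*} (f : ℕ → α) (n : ℕ) :
    Set.range (fun i : Fin n => f (n - i)) = f '' Set.Icc 1 n := by
  ext x
  constructor
  · rintro ⟨i, rfl⟩
    exact ⟨n - i, ⟨by omega, by omega⟩, rfl⟩
  · rintro ⟨j, ⟨hj, hj'⟩, rfl⟩
    exact ⟨⟨n - j, by omega⟩, by simp only; congr; omega⟩

theorem example_heisenberg_subalgebra_general (n k : ℕ) :
    (∀ i ∈ Set.Icc 1 n, ∀ j ∈ Set.Icc 1 n,
      exX n k i * exY n j - exY n j * exX n k i =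
        if i + j = n + 1 then exT n else 0) ∧
    (∀ i ∈ Set.Icc 1 n, ∀ j ∈ Set.Icc 1 n,
      exX n k i * exX n k j - exX n k j * exX n k i = 0) ∧
    (∀ i ∈ Set.Icc 1 n, ∀ j ∈ Set.Icc 1 n,
      exY n i * exY n j - exY n j * exY n i = 0) ∧
    (∀ i ∈ Set.Icc 1 n,
      exX n k i * exT n - exT n * exX n k i = 0 ∧
      exY n i * exT n - exT n * exY n i = 0) ∧
    Module.finrank ℂ
      ↥(Submodule.span ℂ
        ({exT n} ∪ (exX n k '' Set.Icc 1 n) ∪ (exY n '' Set.Icc 1 n))) = 2 * n + 1 ∧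
    ∃ e : ((Fin n → ℂ) × (Fin n → ℂ) × ℂ) ≃ₗ[ℂ]
        ↥(Submodule.span ℂ
          ({exT n} ∪ (exX n k '' Set.Icc 1 n) ∪ (exY n '' Set.Icc 1 n))),
      ∀ a b : (Fin n → ℂ) × (Fin n → ℂ) × ℂ,
        ((e a : Matrix (Fin (2 * n + 2)) (Fin (2 * n + 2)) ℂ) * (e b : Matrix _ _ ℂ) -
            (e b : Matrix _ _ ℂ) * (e a : Matrix _ _ ℂ)) =
          (e (0, 0, ∑ i : Fin n, (a.1 i * b.2.1 i - a.2.1 i * b.1 i)) : Matrix _ _ ℂ) := by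
  have hH := isHeisenbergFamily_exX_exY n k
  have hrange := range_heisenbergMap (R := ℂ) (fun i : Fin n => exX n k (i + 1))
    (fun i : Fin n => exY n (n - i)) (exT n)
  rw [range_fin_add_one_eq_image_Icc, range_fin_sub_eq_image_Icc] at hrange
  let e := (LinearEquiv.ofInjective _ (hH.injective_heisenbergMap (exT_ne_zero n))).trans
    (LinearEquiv.ofEq _ _ hrange)
  refine ⟨fun i hi j hj => lie_exX_exY hi.1 hi.2 hj.1 hj.2,
    fun i hi j hj => lie_exX_exX hi.1 hi.2 hj.1 hj.2,
    fun i _ j hj => lie_exY_exY hj.1 hj.2,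
    fun i hi => ⟨lie_exX_exT hi.1 hi.2, lie_exY_exT hi.2⟩, ?_, e,
    fun a b => hH.lie_heisenbergMap a b⟩
  rw [← e.finrank_eq]
  simp only [Module.finrank_prod, Module.finrank_fin_fun, Module.finrank_self]
  ring

/-- For `1 ≤ n` and `0 ≤ k ≤ n`, the `2n+1` matrices
`X₁,…,X_n, Y₁,…,Y_n, t` of Example 1 span a Lie subalgebra (under the matrix
commutator) of `Mat_{2n+2}(ℂ)` isomorphic to the Heisenberg Lie algebra
`h_{2n+1}`: the nontrivial brackets pair each `X_i` with exactly one `Y_j`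
(namely `j = n+1-i`), all other brackets of basis elements vanish, `t` is
central, the span has dimension `2n+1`, and it is isomorphic (by a linear
equivalence matching brackets) to the abstract Heisenberg Lie algebra on
`(Fin n → ℂ) × (Fin n → ℂ) × ℂ`. -/
theorem example_heisenberg_subalgebra (n k : ℕ) (hn : 1 ≤ n) (hk : k ≤ n) :
    (∀ i ∈ Set.Icc 1 n, ∀ j ∈ Set.Icc 1 n,
      exX n k i * exY n j - exY n j * exX n k i =
        if i + j = n + 1 then exT n else 0) ∧
    (∀ i ∈ Set.Icc 1 n, ∀ j ∈ Set.Icc 1 n,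
      exX n k i * exX n k j - exX n k j * exX n k i = 0) ∧
    (∀ i ∈ Set.Icc 1 n, ∀ j ∈ Set.Icc 1 n,
      exY n i * exY n j - exY n j * exY n i = 0) ∧
    (∀ i ∈ Set.Icc 1 n,
      exX n k i * exT n - exT n * exX n k i = 0 ∧
      exY n i * exT n - exT n * exY n i = 0) ∧
    Module.finrank ℂ
      ↥(Submodule.span ℂ
        ({exT n} ∪ (exX n k '' Set.Icc 1 n) ∪ (exY n '' Set.Icc 1 n))) = 2 * n + 1 ∧
    ∃ e : ((Fin n → ℂ) × (Fin n → ℂ) × ℂ) ≃ₗ[ℂ]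
        ↥(Submodule.span ℂ
          ({exT n} ∪ (exX n k '' Set.Icc 1 n) ∪ (exY n '' Set.Icc 1 n))),
      ∀ a b : (Fin n → ℂ) × (Fin n → ℂ) × ℂ,
        ((e a : Matrix (Fin (2 * n + 2)) (Fin (2 * n + 2)) ℂ) * (e b : Matrix _ _ ℂ) -
            (e b : Matrix _ _ ℂ) * (e a : Matrix _ _ ℂ)) =
          (e (0, 0, ∑ i : Fin n, (a.1 i * b.2.1 i - a.2.1 i * b.1 i)) : Matrix _ _ ℂ) :=
  example_heisenberg_subalgebra_general n k
end

section
/- Let A₁, A₂ be tautological algebras (local algebras A_i = ℂ·1 ⊕ m_i with m_i ≅ h_{2n+1} as Lie algebras, m_i² ⊆ ℂt_i, and t_i·m_i = m_i·t_i = 0) with structure matrices M₁, M₂ with respect to symplectic bases. If f : A₁ → A₂ is an algebra isomorphism sending m₁ to m₂, then there exist k ∈ ℂ* and an invertible matrix C with kM₁ = C·M₂·Cᵗ; consequently after rescaling C, M₁ = C'·M₂·C'ᵗ for some invertible C'. -/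
open Matrix

lemma smul_cancel_aux {A : Type*} [AddCommGroup A] [Module ℂ A] {t : A} (ht : t ≠ 0)
    {a b : ℂ} (h : a • t = b • t) : a = b := by
  by_contra hne
  apply ht
  have h3 : a - b ≠ 0 := sub_ne_zero.mpr hne
  have h2 : (a - b) • t = 0 := by rw [sub_smul, h, sub_self]
  calc t = (a-b)⁻¹ • ((a-b) • t) := by rw [smul_smul, inv_mul_cancel₀ h3, one_smul]
    _ = 0 := by rw [h2, smul_zero]

lemma prod_aux {A : Type*} [Ring A] [Algebra ℂ A] {N : ℕ} (m : Submodule ℂ A)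
    (t : A) (X : Fin N → A) (M : Matrix (Fin N) (Fin N) ℂ)
    (htm : t ∈ m) (hXm : ∀ i, X i ∈ m)
    (hstr : ∀ i j, X i * X j = M i j • t)
    (ht : ∀ x ∈ m, t * x = 0 ∧ x * t = 0)
    (a b : ℂ) (u v : Fin N → ℂ) :
    (a • t + ∑ p, u p • X p) * (b • t + ∑ q, v q • X q)
      = (∑ p, ∑ q, u p * M p q * v q) • t := by
  have htt : t * t = 0 := (ht t htm).1
  have htX : ∀ q, t * X q = 0 := fun q => (ht _ (hXm q)).1
  have hXt : ∀ p, X p * t = 0 := fun p => (ht _ (hXm p)).2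
  rw [mul_add, add_mul, add_mul]
  have e1 : (a • t) * (b • t) = 0 := by rw [smul_mul_assoc, mul_smul_comm, htt]; simp
  have e2 : (a • t) * (∑ q, v q • X q) = 0 := by
    rw [Finset.mul_sum]; simp [mul_smul_comm, smul_mul_assoc, htX]
  have e3 : (∑ p, u p • X p) * (b • t) = 0 := by
    rw [Finset.sum_mul]; simp [mul_smul_comm, smul_mul_assoc, hXt]
  have e4 : (∑ p, u p • X p) * (∑ q, v q • X q) = (∑ p, ∑ q, u p * M p q * v q) • t := by
    rw [Finset.sum_mul, Finset.sum_smul]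
    refine Finset.sum_congr rfl fun p _ => ?_
    rw [smul_mul_assoc, Finset.mul_sum, Finset.smul_sum, Finset.sum_smul]
    refine Finset.sum_congr rfl fun q _ => ?_
    rw [mul_smul_comm, hstr, smul_smul, smul_smul]
    congr 1; ring
  rw [e1, e2, e3, e4]; simp

lemma taut_aux {A₁ A₂ : Type*} [Ring A₁] [Algebra ℂ A₁] [Ring A₂] [Algebra ℂ A₂]
    {N : ℕ}
    (m₁ : Submodule ℂ A₁) (m₂ : Submodule ℂ A₂)
    (t₁ : A₁) (t₂ : A₂) (X₁ : Fin N → A₁) (X₂ : Fin N → A₂)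
    (hspan₁ : m₁ = Submodule.span ℂ (insert t₁ (Set.range X₁)))
    (hspan₂ : m₂ = Submodule.span ℂ (insert t₂ (Set.range X₂)))
    (ht₁ : ∀ x ∈ m₁, t₁ * x = 0 ∧ x * t₁ = 0)
    (hcen₂ : ∀ a ∈ m₂, (∀ b ∈ m₂, a * b = b * a) → ∃ c : ℂ, a = c • t₂)
    (ht₁0 : t₁ ≠ 0)
    (f : A₁ ≃ₐ[ℂ] A₂) (hf : ∀ x : A₁, x ∈ m₁ ↔ f x ∈ m₂) :
    ∃ k : ℂ, k ≠ 0 ∧ ∃ c : Fin N → ℂ, ∃ C : Matrix (Fin N) (Fin N) ℂ,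
      f t₁ = k • t₂ ∧ ∀ i, f (X₁ i) = c i • t₂ + ∑ j, C i j • X₂ j := by
  have ht₁m : t₁ ∈ m₁ := by
    rw [hspan₁]; exact Submodule.subset_span (Set.mem_insert _ _)
  have hX₁m : ∀ i, X₁ i ∈ m₁ := fun i => by
    rw [hspan₁]; exact Submodule.subset_span (Set.mem_insert_of_mem _ ⟨i, rfl⟩)
  obtain ⟨k, hk⟩ : ∃ c : ℂ, f t₁ = c • t₂ := by
    refine hcen₂ _ ((hf t₁).mp ht₁m) ?_
    intro b hb
    have hxb : f.symm b ∈ m₁ := (hf _).mpr (by simpa using hb)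
    have h1 : f t₁ * b = 0 := by
      have := (ht₁ _ hxb).1
      calc f t₁ * b = f (t₁ * f.symm b) := by rw [_root_.map_mul]; simp
        _ = 0 := by rw [this, map_zero]
    have h2 : b * f t₁ = 0 := by
      have := (ht₁ _ hxb).2
      calc b * f t₁ = f (f.symm b * t₁) := by rw [_root_.map_mul]; simp
        _ = 0 := by rw [this, map_zero]
    rw [h1, h2]
  have hk0 : k ≠ 0 := by
    rintro rfl
    simp only [zero_smul] at hk
    exact ht₁0 (f.injective (by simpa using hk))
  have hmem : ∀ i, f (X₁ i) ∈ Submodule.span ℂ (Set.range (Fin.cons t₂ X₂ : Fin (N+1) → A₂)) := by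
    intro i
    rw [Fin.range_cons, ← hspan₂]
    exact (hf _).mp (hX₁m i)
  choose d hd using fun i => (Submodule.mem_span_range_iff_exists_fun ℂ).mp (hmem i)
  refine ⟨k, hk0, fun i => d i 0, fun i j => d i j.succ, hk, fun i => ?_⟩
  rw [← hd i, Fin.sum_univ_succ]
  simp

/-- If two tautological algebras `A₁ = ℂ·1 ⊕ m₁`, `A₂ = ℂ·1 ⊕ m₂`
(with `mᵢ` Heisenberg with center `ℂtᵢ`, structure matrices `Mᵢ` with respect to
symplectic bases `tᵢ, Xᵢ`, and `tᵢ·mᵢ = mᵢ·tᵢ = 0`) are isomorphic via an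
algebra isomorphism `f` with `f(m₁) = m₂`, then `k·M₁ = C·M₂·Cᵗ` for some
`k ∈ ℂ*` and invertible `C`; consequently `M₁ = C'·M₂·C'ᵗ` for some invertible `C'`. -/
theorem tautological_iso_congruent_structure_matrices
    (n : ℕ)
    (A₁ A₂ : Type*) [Ring A₁] [Algebra ℂ A₁] [Ring A₂] [Algebra ℂ A₂]
    (m₁ : Submodule ℂ A₁) (m₂ : Submodule ℂ A₂)
    (t₁ : A₁) (t₂ : A₂)
    (X₁ : Fin (2 * n) → A₁) (X₂ : Fin (2 * n) → A₂)
    (M₁ M₂ : Matrix (Fin (2 * n)) (Fin (2 * n)) ℂ)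
    -- the bases
    (hspan₁ : m₁ = Submodule.span ℂ (insert t₁ (Set.range X₁)))
    (hspan₂ : m₂ = Submodule.span ℂ (insert t₂ (Set.range X₂)))
    (hli₁ : LinearIndependent ℂ (Fin.cons t₁ X₁ : Fin (2 * n + 1) → A₁))
    (hli₂ : LinearIndependent ℂ (Fin.cons t₂ X₂ : Fin (2 * n + 1) → A₂))
    -- decomposition A = ℂ·1 ⊕ m
    (hdec₁ : ∀ a : A₁, ∃ c : ℂ, a - c • (1 : A₁) ∈ m₁)
    (hdec₂ : ∀ a : A₂, ∃ c : ℂ, a - c • (1 : A₂) ∈ m₂)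
    -- structure matrices with respect to the symplectic bases
    (hstr₁ : ∀ i j : Fin (2 * n), X₁ i * X₁ j = M₁ i j • t₁)
    (hstr₂ : ∀ i j : Fin (2 * n), X₂ i * X₂ j = M₂ i j • t₂)
    (hsymp₁ : M₁ - M₁ᵀ = stdOmega n)
    (hsymp₂ : M₂ - M₂ᵀ = stdOmega n)
    -- t·m = m·t = 0
    (ht₁ : ∀ x ∈ m₁, t₁ * x = 0 ∧ x * t₁ = 0)
    (ht₂ : ∀ x ∈ m₂, t₂ * x = 0 ∧ x * t₂ = 0)
    -- ℂt is the center of the Heisenberg Lie algebra m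
    (hcen₁ : ∀ a ∈ m₁, (∀ b ∈ m₁, a * b = b * a) → ∃ c : ℂ, a = c • t₁)
    (hcen₂ : ∀ a ∈ m₂, (∀ b ∈ m₂, a * b = b * a) → ∃ c : ℂ, a = c • t₂)
    (ht₁0 : t₁ ≠ 0) (ht₂0 : t₂ ≠ 0)
    -- the isomorphism, sending m₁ onto m₂
    (f : A₁ ≃ₐ[ℂ] A₂) (hf : ∀ x : A₁, x ∈ m₁ ↔ f x ∈ m₂) :
    (∃ k : ℂ, k ≠ 0 ∧ ∃ C : Matrix (Fin (2 * n)) (Fin (2 * n)) ℂ,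
        IsUnit C ∧ k • M₁ = C * M₂ * Cᵀ) ∧
    (∃ C' : Matrix (Fin (2 * n)) (Fin (2 * n)) ℂ,
        IsUnit C' ∧ M₁ = C' * M₂ * C'ᵀ) := by
  classical
  have hf' : ∀ x : A₂, x ∈ m₂ ↔ f.symm x ∈ m₁ := by
    intro x
    constructor
    · intro hx; exact (hf _).mpr (by simpa using hx)
    · intro hx; have := (hf _).mp hx; simpa using this
  obtain ⟨k, hk0, c, C, hft, hfX⟩ :=
    taut_aux m₁ m₂ t₁ t₂ X₁ X₂ hspan₁ hspan₂ ht₁ hcen₂ ht₁0 f hf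
  obtain ⟨k', hk0', c', C', hft', hfX'⟩ :=
    taut_aux m₂ m₁ t₂ t₁ X₂ X₁ hspan₂ hspan₁ ht₂ hcen₁ ht₂0 f.symm hf'
  have ht₂m : t₂ ∈ m₂ := by
    rw [hspan₂]; exact Submodule.subset_span (Set.mem_insert _ _)
  have hX₂m : ∀ i, X₂ i ∈ m₂ := fun i => by
    rw [hspan₂]; exact Submodule.subset_span (Set.mem_insert_of_mem _ ⟨i, rfl⟩)
  -- key entrywise identity
  have hentry : ∀ i j, (C * M₂ * Cᵀ) i j = ∑ p, ∑ q, C i p * M₂ p q * C j q := by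
    intro i j
    simp only [Matrix.mul_apply, Matrix.transpose_apply, Finset.sum_mul]
    rw [Finset.sum_comm]
  have key : ∀ i j, (k * M₁ i j) • t₂ = ((C * M₂ * Cᵀ) i j) • t₂ := by
    intro i j
    have lhs : f (X₁ i * X₁ j) = (k * M₁ i j) • t₂ := by
      rw [hstr₁, _root_.map_smul, hft, smul_smul, mul_comm]
    have rhs : f (X₁ i) * f (X₁ j) = (∑ p, ∑ q, C i p * M₂ p q * C j q) • t₂ := by
      rw [hfX, hfX]
      exact prod_aux m₂ t₂ X₂ M₂ ht₂m hX₂m hstr₂ ht₂ _ _ _ _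
    rw [hentry, ← rhs, ← lhs, _root_.map_mul]
  have hkM : k • M₁ = C * M₂ * Cᵀ := by
    ext i j
    have := smul_cancel_aux ht₂0 (key i j)
    simpa using this
  -- C * C' = 1
  have expand : ∀ i, X₁ i = (c i * k' + ∑ j, C i j * c' j) • t₁ +
      ∑ q, ((C * C') i q) • X₁ q := by
    intro i
    conv_lhs => rw [← f.symm_apply_apply (X₁ i)]
    rw [hfX, map_add, _root_.map_smul, map_sum, hft']
    have : ∀ j, f.symm (C i j • X₂ j) = (C i j * c' j) • t₁ + ∑ q, (C i j * C' j q) • X₁ q := by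
      intro j
      rw [_root_.map_smul, hfX' j, smul_add, Finset.smul_sum]
      simp [smul_smul]
    rw [Finset.sum_congr rfl fun j _ => this j]
    rw [Finset.sum_add_distrib, ← Finset.sum_smul, smul_smul, ← add_assoc, ← add_smul]
    congr 1
    rw [Finset.sum_comm]
    refine Finset.sum_congr rfl fun q _ => ?_
    rw [← Finset.sum_smul, Matrix.mul_apply]
  have hCC' : C * C' = 1 := by
    ext i p
    set g : Fin (2 * n + 1) → ℂ :=
      Fin.cons (c i * k' + ∑ j, C i j * c' j)
        (fun q => (C * C') i q - (1 : Matrix (Fin (2*n)) (Fin (2*n)) ℂ) i q) with hg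
    have hsum : ∑ r, g r • (Fin.cons t₁ X₁ : Fin (2*n+1) → A₁) r = 0 := by
      rw [Fin.sum_univ_succ]
      simp only [hg, Fin.cons_zero, Fin.cons_succ, sub_smul, Finset.sum_sub_distrib]
      have hδ : ∑ q, ((1 : Matrix (Fin (2*n)) (Fin (2*n)) ℂ) i q) • X₁ q = X₁ i := by
        simp [Matrix.one_apply]
      rw [hδ, ← add_sub_assoc, ← expand i, sub_self]
    have := Fintype.linearIndependent_iff.mp hli₁ g hsum (Fin.succ p)
    simp only [hg, Fin.cons_succ] at this
    exact sub_eq_zero.mp this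
  have hCinv : Invertible C := invertibleOfRightInverse C C' hCC'
  have hCU : IsUnit C := isUnit_of_invertible C
  refine ⟨⟨k, hk0, C, hCU, hkM⟩, ?_⟩
  obtain ⟨s, hs⟩ : ∃ z : ℂ, z ^ 2 = k := IsAlgClosed.exists_pow_nat_eq k two_pos
  have hs0 : s ≠ 0 := by
    rintro rfl
    rw [← hs] at hk0
    simp at hk0
  refine ⟨s⁻¹ • C, ?_, ?_⟩
  · have : (s⁻¹ • C) * (s • C') = 1 := by
      rw [Matrix.smul_mul, Matrix.mul_smul, smul_smul, inv_mul_cancel₀ hs0, one_smul, hCC']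
    have := invertibleOfRightInverse _ _ this
    exact isUnit_of_invertible _
  · have h1 : (s⁻¹ • C) * M₂ * (s⁻¹ • C)ᵀ = (s⁻¹ * s⁻¹) • (C * M₂ * Cᵀ) := by
      rw [Matrix.transpose_smul, Matrix.smul_mul, Matrix.smul_mul, Matrix.mul_smul, smul_smul]
    rw [h1, ← hkM, smul_smul]
    have h2 : s⁻¹ * s⁻¹ * k = 1 := by
      rw [← hs]; field_simp
    rw [h2, one_smul]
end

section
/- Let h ⊂ gl(V) be a matrix realization of the Heisenberg Lie algebra h_{2n+1} = w ⊕ ℂt (with [w,w] = ℂt central), let m be the two-sided ideal generated by h in the algebra A = ℂ·1 ⊕ m it generates in End(V), and suppose t·m = m·t = 0 and V is a cyclic A-module with cyclic vector o (A·o = V). If S₁,…,S_k is a basis of ker(ev : A → V, S ↦ S·o) and S_i = X_i + Y_i with X_i ∈ w, Y_i ∈ m², then X₁,…,X_k are linearly independent, pairwise commuting elements of w; consequently k ≤ n and dim A ≤ 3n+2. -/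
/-
Write `[a, b] = a * b - b * a`. Because `A = ℂ·1 ⊕ m` and `t` kills `m` on both sides, `t` is
central in `A` and `A·t = ℂt`; an induction over the generators `w ∪ {t}` then puts every
commutator of `A` in `ℂt`. For `x, y ∈ m` this gives `[x * y, b] = x [y, b] + [x, b] y = 0`, so
`m²` is central in `A`. A central element killing the cyclic vector `o` kills `A·o = V`, hence
vanishes. Applied to the elements of `span S ∩ m²` this turns the linear independence of the `Sᵢ`
into that of the `Xᵢ`; applied to `[Sᵢ, Sⱼ] = [Xᵢ, Xⱼ] ∈ ℂt` it shows that the `Xᵢ` commute. So the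
`Xᵢ` span an isotropic subspace for the non-degenerate form `[x, y] = B(x, y) t` on `w`, which
forces `2k ≤ 2n`; finally `dim A ≤ dim V + dim ker(ev) ≤ (2n + 2) + k`.
-/

open Matrix

/-- `m²`: the span of products of two elements of `m`. -/
noncomputable def sqIdeal {N : ℕ} (m : Submodule ℂ (Matrix (Fin N) (Fin N) ℂ)) :
    Submodule ℂ (Matrix (Fin N) (Fin N) ℂ) :=
  Submodule.span ℂ {a | ∃ x ∈ m, ∃ y ∈ m, a = x * y}

open Submodule in
theorem LinearIndependent.of_sub_mem {ι K M : Type*} [Ring K] [AddCommGroup M] [Module K M]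
    {S X : ι → M} {Z : Submodule K M} (hS : LinearIndependent K S)
    (hSZ : Disjoint (span K (Set.range S)) Z) (hSX : ∀ i, S i - X i ∈ Z) :
    LinearIndependent K X := by
  have hS' := hS.map (f := Z.mkQ) (by rwa [ker_mkQ])
  have hSX' : Z.mkQ ∘ S = Z.mkQ ∘ X := funext fun i => (Submodule.Quotient.eq Z).mpr (hSX i)
  exact LinearIndependent.of_comp Z.mkQ (hSX' ▸ hS')

open Module Submodule in
theorem Submodule.finrank_le_finrank_add_card_of_inf_ker_le_span {ι K M N : Type*} [Fintype ι]
    [Field K] [AddCommGroup M] [Module K M] [FiniteDimensional K M] [AddCommGroup N] [Module K N]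
    [FiniteDimensional K N] (f : M →ₗ[K] N) {P : Submodule K M} {b : ι → M}
    (h : P ⊓ LinearMap.ker f ≤ span K (Set.range b)) :
    finrank K P ≤ finrank K N + Fintype.card ι := by
  let g := f ∘ₗ P.subtype
  have hker : (LinearMap.ker g).map P.subtype ≤ span K (Set.range b) := by
    rintro _ ⟨x, hx, rfl⟩
    exact h ⟨x.2, hx⟩
  have hrange : finrank K (LinearMap.range g) ≤ finrank K N := Submodule.finrank_le _
  have hker_card : finrank K (LinearMap.ker g) ≤ Fintype.card ι :=
    calc finrank K (LinearMap.ker g) = finrank K ((LinearMap.ker g).map P.subtype) :=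
          (finrank_map_subtype_eq P _).symm
      _ ≤ finrank K (span K (Set.range b)) := finrank_mono hker
      _ ≤ Fintype.card ι := finrank_range_le_card b
  have := g.finrank_range_add_finrank_ker
  omega

open Module in
theorem LinearMap.BilinForm.two_mul_finrank_le_of_le_orthogonal {K V : Type*} [Field K]
    [AddCommGroup V] [Module K V] [FiniteDimensional K V] {B : LinearMap.BilinForm K V}
    (hB : B.SeparatingLeft) {W : Submodule K V} (hW : W ≤ B.orthogonal W) :
    2 * finrank K W ≤ finrank K V := by
  have h := finrank_add_finrank_orthogonal' (B := B) W
  rw [LinearMap.separatingLeft_iff_ker_eq_bot.mp hB, inf_bot_eq, finrank_bot, add_zero] at h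
  have := Submodule.finrank_mono hW
  omega

theorem Matrix.eq_zero_of_mem_centralizer_of_mulVec_eq_zero {ι K : Type*} [Fintype ι]
    [CommSemiring K] {A : Set (Matrix ι ι K)} {o : ι → K} (hcyc : ∀ v, ∃ P ∈ A, P *ᵥ o = v)
    {z : Matrix ι ι K} (hz : z ∈ Set.centralizer A) (hzo : z *ᵥ o = 0) : z = 0 := by
  refine Matrix.ext_iff_mulVec.mpr fun v => ?_
  obtain ⟨P, hP, rfl⟩ := hcyc v
  rw [mulVec_mulVec, ← hz P hP, ← mulVec_mulVec, hzo, mulVec_zero, zero_mulVec]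

section Commutators

open Submodule

variable {K R : Type*} [CommRing K] [Ring R] [Algebra K R]

theorem mul_eq_smul_of_sub_smul_one_mem {m : Submodule K R} {t b : R} {c : K}
    (ht : ∀ x ∈ m, t * x = 0 ∧ x * t = 0) (hb : b - c • 1 ∈ m) :
    t * b = c • t ∧ b * t = c • t := by
  obtain ⟨h₁, h₂⟩ := ht _ hb
  rw [mul_sub, mul_smul_comm, mul_one, sub_eq_zero] at h₁
  rw [sub_mul, smul_mul_assoc, one_mul, sub_eq_zero] at h₂
  exact ⟨h₁, h₂⟩

theorem mul_mul_sub_mul_mul_eq {x y b t : R} {c d : K} (hx : x * b - b * x = c • t)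
    (hy : y * b - b * y = d • t) : x * y * b - b * (x * y) = d • (x * t) + c • (t * y) := by
  have : x * y * b - b * (x * y) = x * (y * b - b * y) + (x * b - b * x) * y := by noncomm_ring
  rw [this, hx, hy, mul_smul_comm, smul_mul_assoc]

section Adjoin

variable {s : Set R} {t : R}

theorem mul_sub_mul_mem_span_of_forall_generator
    (hl : ∀ b ∈ Algebra.adjoin K s, b * t ∈ K ∙ t) (hr : ∀ b ∈ Algebra.adjoin K s, t * b ∈ K ∙ t)
    {b : R} (hb : ∀ g ∈ s, g * b - b * g ∈ K ∙ t)
    {a : R} (ha : a ∈ Algebra.adjoin K s) : a * b - b * a ∈ K ∙ t := by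
  induction ha using Algebra.adjoin_induction with
  | mem g hg => exact hb g hg
  | algebraMap r => rw [Algebra.commutes, sub_self]; exact zero_mem _
  | add x y _ _ hx hy => rw [add_mul, mul_add, add_sub_add_comm]; exact add_mem hx hy
  | mul x y hx' hy' hx hy =>
    obtain ⟨c, hc⟩ := mem_span_singleton.mp hx
    obtain ⟨d, hd⟩ := mem_span_singleton.mp hy
    rw [mul_mul_sub_mul_mul_eq hc.symm hd.symm]
    exact add_mem (smul_mem _ _ (hl x hx')) (smul_mem _ _ (hr y hy'))

theorem mul_sub_mul_mem_span_of_mem_adjoin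
    (hl : ∀ b ∈ Algebra.adjoin K s, b * t ∈ K ∙ t) (hr : ∀ b ∈ Algebra.adjoin K s, t * b ∈ K ∙ t)
    (hs : ∀ x ∈ s, ∀ y ∈ s, x * y - y * x ∈ K ∙ t)
    {a b : R} (ha : a ∈ Algebra.adjoin K s) (hb : b ∈ Algebra.adjoin K s) :
    a * b - b * a ∈ K ∙ t := by
  refine mul_sub_mul_mem_span_of_forall_generator hl hr (fun g hg => ?_) ha
  rw [← neg_sub]
  exact neg_mem (mul_sub_mul_mem_span_of_forall_generator hl hr (fun g' hg' => hs g' hg' g hg) hb)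

end Adjoin

theorem mul_sub_mul_mem_span_of_mem_adjoin_union {w : Submodule K R} {t : R}
    (hbr : ∀ x ∈ w, ∀ y ∈ w, ∃ c : K, x * y - y * x = c • t)
    (hwt : ∀ x ∈ w, t * x = 0 ∧ x * t = 0)
    (htA : ∀ b ∈ Algebra.adjoin K ((w : Set R) ∪ {t}), ∃ c : K, t * b = c • t ∧ b * t = c • t)
    {a b : R} (ha : a ∈ Algebra.adjoin K ((w : Set R) ∪ {t}))
    (hb : b ∈ Algebra.adjoin K ((w : Set R) ∪ {t})) :
    a * b - b * a ∈ K ∙ t := by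
  have hwt' : ∀ x ∈ w, x * t - t * x = 0 := fun x hx => by
    rw [(hwt x hx).1, (hwt x hx).2, sub_self]
  refine mul_sub_mul_mem_span_of_mem_adjoin (fun b hb => ?_) (fun b hb => ?_) ?_ ha hb
  · obtain ⟨c, -, hc⟩ := htA b hb
    exact mem_span_singleton.mpr ⟨c, hc.symm⟩
  · obtain ⟨c, hc, -⟩ := htA b hb
    exact mem_span_singleton.mpr ⟨c, hc.symm⟩
  rintro x (hx | rfl) y (hy | rfl)
  · obtain ⟨c, hc⟩ := hbr x hx y hy
    exact mem_span_singleton.mpr ⟨c, hc.symm⟩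
  · rw [hwt' x hx]; exact zero_mem _
  · rw [← neg_sub, hwt' y hy, neg_zero]; exact zero_mem _
  · rw [sub_self]; exact zero_mem _

theorem span_mul_le_centralizer {A : Subalgebra K R} {m : Submodule K R} {t : R}
    (hmA : ∀ x ∈ m, x ∈ A) (ht : ∀ x ∈ m, t * x = 0 ∧ x * t = 0)
    (hA : ∀ a ∈ A, ∀ b ∈ A, a * b - b * a ∈ K ∙ t) :
    span K {a | ∃ x ∈ m, ∃ y ∈ m, a = x * y} ≤
      Subalgebra.toSubmodule (Subalgebra.centralizer K (A : Set R)) := by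
  rw [span_le]
  rintro _ ⟨x, hx, y, hy, rfl⟩ b hb
  obtain ⟨c, hc⟩ := mem_span_singleton.mp (hA x (hmA x hx) b hb)
  obtain ⟨d, hd⟩ := mem_span_singleton.mp (hA y (hmA y hy) b hb)
  have h := mul_mul_sub_mul_mul_eq hc.symm hd.symm
  rw [(ht x hx).2, (ht y hy).1, smul_zero, smul_zero, add_zero, sub_eq_zero] at h
  exact h.symm

theorem mul_sub_mul_eq_of_commute_sub {s s' x x' : R} (hs : Commute (s - x) s')
    (hs' : Commute (s' - x') x) : s * s' - s' * s = x * x' - x' * x := by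
  have : s * s' - s' * s - (x * x' - x' * x) =
      ((s - x) * s' - s' * (s - x)) + (x * (s' - x') - (s' - x') * x) := by noncomm_ring
  rwa [hs.eq, hs'.eq, sub_self, sub_self, add_zero, sub_eq_zero] at this

end Commutators

open Module Submodule in
theorem two_mul_card_le_finrank_of_commute {K R : Type*} [Field K] [Ring R] [Algebra K R]
    {w : Submodule K R} [FiniteDimensional K w] {t : R}
    (hbr : ∀ x ∈ w, ∀ y ∈ w, ∃ c : K, x * y - y * x = c • t)
    (hnd : ∀ x ∈ w, (∀ y ∈ w, x * y - y * x = 0) → x = 0)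
    {ι : Type*} [Fintype ι] {X : ι → R} (hX : ∀ i, X i ∈ w) (hli : LinearIndependent K X)
    (hcomm : ∀ i j, X i * X j = X j * X i) :
    2 * Fintype.card ι ≤ finrank K w := by
  obtain ⟨φ, hφ⟩ : ∃ φ : Dual K R, ∀ c : K, φ (c • t) = 0 → c • t = 0 := by
    by_cases ht : t = 0
    · exact ⟨0, fun c _ => by rw [ht, smul_zero]⟩
    · obtain ⟨φ, hφ⟩ := Projective.exists_dual_ne_zero K ht
      refine ⟨φ, fun c hc => ?_⟩
      rw [map_smul, smul_eq_mul, mul_eq_zero] at hc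
      rw [hc.resolve_right hφ, zero_smul]
  let B : LinearMap.BilinForm K w :=
    ((LinearMap.mul K R - (LinearMap.mul K R).flip).compl₁₂ w.subtype w.subtype).compr₂ φ
  have hB : ∀ x y : w, B x y = φ (x * y - y * x) := fun _ _ => rfl
  have hsep : B.SeparatingLeft := fun x hx => Subtype.ext <| hnd x x.2 fun y hy => by
    obtain ⟨c, hc⟩ := hbr x x.2 y hy
    rw [hc]
    exact hφ c (hc ▸ hx ⟨y, hy⟩)
  let X' : ι → w := fun i => ⟨X i, hX i⟩
  have hli' : LinearIndependent K X' := LinearIndependent.of_comp w.subtype hli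
  have hiso : span K (Set.range X') ≤ B.orthogonal (span K (Set.range X')) := by
    rw [span_le]
    rintro _ ⟨j, rfl⟩ u hu
    have : span K (Set.range X') ≤ LinearMap.ker (B.flip (X' j)) := by
      rw [span_le]
      rintro _ ⟨i, rfl⟩
      simp [hB, X', hcomm]
    exact this hu
  calc 2 * Fintype.card ι = 2 * finrank K (span K (Set.range X')) := by
        rw [finrank_span_eq_card hli']
    _ ≤ finrank K w := LinearMap.BilinForm.two_mul_finrank_le_of_le_orthogonal hsep hiso

theorem ker_ev_abelian_and_dim_bound_general
    (n k : ℕ)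
    (A : Subalgebra ℂ (Matrix (Fin (2 * n + 2)) (Fin (2 * n + 2)) ℂ))
    (m w : Submodule ℂ (Matrix (Fin (2 * n + 2)) (Fin (2 * n + 2)) ℂ))
    (t : Matrix (Fin (2 * n + 2)) (Fin (2 * n + 2)) ℂ)
    (o : Fin (2 * n + 2) → ℂ)
    -- A is generated by the Heisenberg Lie algebra h = w ⊕ ℂt
    (hAgen : A = Algebra.adjoin ℂ ((w : Set (Matrix (Fin (2 * n + 2)) (Fin (2 * n + 2)) ℂ)) ∪ {t}))
    -- A = ℂ·1 ⊕ m, m the maximal ideal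
    (hmA : ∀ x ∈ m, x ∈ A)
    (hdec : ∀ a ∈ A, ∃ c : ℂ, a - c • (1 : Matrix (Fin (2 * n + 2)) (Fin (2 * n + 2)) ℂ) ∈ m)
    -- the Heisenberg structure: h = w ⊕ ℂt, [w,w] = ℂt non-degenerate, t central
    (hwm : w ≤ m)
    (hwdim : Module.finrank ℂ ↥w = 2 * n)
    (hbr : ∀ x ∈ w, ∀ y ∈ w, ∃ c : ℂ, x * y - y * x = c • t)
    (hnd : ∀ x ∈ w, (∀ y ∈ w, x * y - y * x = 0) → x = 0)
    (ht : ∀ x ∈ m, t * x = 0 ∧ x * t = 0)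
    -- o is a cyclic vector: A·o = V
    (hcyc : ∀ v : Fin (2 * n + 2) → ℂ, ∃ S ∈ A, S.mulVec o = v)
    -- S is a basis of ker(ev), decomposed as S i = X i + Y i
    (S X Y : Fin k → Matrix (Fin (2 * n + 2)) (Fin (2 * n + 2)) ℂ)
    (hSm : ∀ i, S i ∈ m)
    (hSker : ∀ i, (S i).mulVec o = 0)
    (hSli : LinearIndependent ℂ S)
    (hSspan : ∀ a ∈ A, a.mulVec o = 0 → a ∈ Submodule.span ℂ (Set.range S))
    (hX : ∀ i, X i ∈ w) (hY : ∀ i, Y i ∈ sqIdeal m)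
    (hSXY : ∀ i, S i = X i + Y i) :
    LinearIndependent ℂ X ∧
    (∀ i j, X i * X j = X j * X i) ∧
    k ≤ n ∧
    Module.finrank ℂ ↥A ≤ 3 * n + 2 := by
  have hchar : ∀ b ∈ A, ∃ c : ℂ, t * b = c • t ∧ b * t = c • t := fun b hb =>
    (hdec b hb).imp fun _ hc => mul_eq_smul_of_sub_smul_one_mem ht hc
  have hcommA : ∀ a ∈ A, ∀ b ∈ A, a * b - b * a ∈ ℂ ∙ t := by
    subst hAgen
    exact fun a ha b hb =>
      mul_sub_mul_mem_span_of_mem_adjoin_union hbr (fun x hx => ht x (hwm hx)) hchar ha hb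
  have htZ : ℂ ∙ t ≤ Subalgebra.toSubmodule (Subalgebra.centralizer ℂ (A : Set _)) :=
    Submodule.span_singleton_le_iff_mem _ _ |>.mpr fun b hb =>
      let ⟨_, h₁, h₂⟩ := hchar b hb; h₂.trans h₁.symm
  have hsqZ := span_mul_le_centralizer hmA ht hcommA
  have hZ : ∀ z ∈ Set.centralizer (A : Set _), z *ᵥ o = 0 → z = 0 := fun _ hz =>
    Matrix.eq_zero_of_mem_centralizer_of_mulVec_eq_zero hcyc hz
  let ev := (mulVecBilin (m := Fin (2 * n + 2)) ℂ ℂ).flip o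
  have hSA : ∀ i, S i ∈ A := fun i => hmA _ (hSm i)
  have hYS : ∀ i, S i - X i = Y i := fun i => by rw [hSXY i, add_sub_cancel_left]
  have hXli : LinearIndependent ℂ X := by
    refine hSli.of_sub_mem (Z := sqIdeal m) ?_ fun i => hYS i ▸ hY i
    have hS_ker : Submodule.span ℂ (Set.range S) ≤ LinearMap.ker ev :=
      Submodule.span_le.mpr <| Set.range_subset_iff.mpr hSker
    exact Submodule.disjoint_def.mpr fun z hzS hzY => hZ z (hsqZ hzY) (hS_ker hzS)
  have hXcomm : ∀ i j, X i * X j = X j * X i := by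
    intro i j
    rw [← sub_eq_zero, ← mul_sub_mul_eq_of_commute_sub (s := S i) (s' := S j)]
    · refine hZ _ (htZ (hcommA _ (hSA i) _ (hSA j))) ?_
      rw [sub_mulVec, ← mulVec_mulVec, ← mulVec_mulVec, hSker, hSker, mulVec_zero, mulVec_zero,
        sub_self]
    · exact (hYS i ▸ hsqZ (hY i) (S j) (hSA j)).symm
    · exact (hYS j ▸ hsqZ (hY j) (X i) (hmA _ (hwm (hX i)))).symm
  have hkn := two_mul_card_le_finrank_of_commute hbr hnd hX hXli hXcomm
  have hdim := Submodule.finrank_le_finrank_add_card_of_inf_ker_le_span ev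
    (P := Subalgebra.toSubmodule A) (b := S) fun a ha => hSspan a ha.1 ha.2
  rw [Fintype.card_fin, hwdim] at hkn
  rw [Subalgebra.finrank_toSubmodule, Module.finrank_fin_fun, Fintype.card_fin] at hdim
  exact ⟨hXli, hXcomm, by omega, by omega⟩

/-- For a matrix realization `h = w ⊕ ℂt` of the Heisenberg Lie
algebra in `End(V)`, `V = ℂ^{2n+2}`, generating a local algebra `A = ℂ·1 ⊕ m`
with `t·m = m·t = 0` and a cyclic vector `o`, if `S₁,…,S_k` is a basis of
`ker(ev)` and `S_i = X_i + Y_i` with `X_i ∈ w`, `Y_i ∈ m²`, then the `X_i` are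
linearly independent and pairwise commuting elements of `w`; consequently
`k ≤ n` and `dim A ≤ 3n+2`. -/
theorem ker_ev_abelian_and_dim_bound
    (n k : ℕ)
    (A : Subalgebra ℂ (Matrix (Fin (2 * n + 2)) (Fin (2 * n + 2)) ℂ))
    (m w : Submodule ℂ (Matrix (Fin (2 * n + 2)) (Fin (2 * n + 2)) ℂ))
    (t : Matrix (Fin (2 * n + 2)) (Fin (2 * n + 2)) ℂ)
    (o : Fin (2 * n + 2) → ℂ)
    -- A is generated by the Heisenberg Lie algebra h = w ⊕ ℂt
    (hAgen : A = Algebra.adjoin ℂ ((w : Set (Matrix (Fin (2 * n + 2)) (Fin (2 * n + 2)) ℂ)) ∪ {t}))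
    -- A = ℂ·1 ⊕ m, m the maximal ideal
    (hmA : ∀ x ∈ m, x ∈ A)
    (hdec : ∀ a ∈ A, ∃ c : ℂ, a - c • (1 : Matrix (Fin (2 * n + 2)) (Fin (2 * n + 2)) ℂ) ∈ m)
    -- the Heisenberg structure: h = w ⊕ ℂt, [w,w] = ℂt non-degenerate, t central
    (hwm : w ≤ m) (htm : t ∈ m)
    (hwdim : Module.finrank ℂ ↥w = 2 * n)
    (hbr : ∀ x ∈ w, ∀ y ∈ w, ∃ c : ℂ, x * y - y * x = c • t)
    (hnd : ∀ x ∈ w, (∀ y ∈ w, x * y - y * x = 0) → x = 0)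
    (ht : ∀ x ∈ m, t * x = 0 ∧ x * t = 0)
    -- m = w ⊕ m²
    (hsum : ∀ x ∈ m, ∃ u ∈ w, ∃ v ∈ sqIdeal m, x = u + v)
    (hint : ∀ u ∈ w, u ∈ sqIdeal m → u = 0)
    -- o is a cyclic vector: A·o = V
    (hcyc : ∀ v : Fin (2 * n + 2) → ℂ, ∃ S ∈ A, S.mulVec o = v)
    -- S is a basis of ker(ev), decomposed as S i = X i + Y i
    (S X Y : Fin k → Matrix (Fin (2 * n + 2)) (Fin (2 * n + 2)) ℂ)
    (hSm : ∀ i, S i ∈ m)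
    (hSker : ∀ i, (S i).mulVec o = 0)
    (hSli : LinearIndependent ℂ S)
    (hSspan : ∀ a ∈ A, a.mulVec o = 0 → a ∈ Submodule.span ℂ (Set.range S))
    (hX : ∀ i, X i ∈ w) (hY : ∀ i, Y i ∈ sqIdeal m)
    (hSXY : ∀ i, S i = X i + Y i) :
    LinearIndependent ℂ X ∧
    (∀ i j, X i * X j = X j * X i) ∧
    k ≤ n ∧
    Module.finrank ℂ ↥A ≤ 3 * n + 2 :=
  ker_ev_abelian_and_dim_bound_general n k A m w t o hAgen hmA hdec hwm hwdim hbr hnd ht hcyc S X Y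
    hSm hSker hSli hSspan hX hY hSXY
end
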